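/- arXiv:2405.05332 — 5 statements merged into one kernel-verified Lean document; each statement's English description precedes it below -/
import Mathlib

section
/- Let m ≥ 1 and let F : ℝ^m → ℝ be such that for each index k, when all variables other than φ_k are fixed, the resulting single-variable function φ_k ↦ F(φ) is a trigonometric polynomial of degree at most 2 (with coefficients depending on the other variables). Then the uniform average of F over [0,2π]^m equals the average of F over the 4^m Clifford points: (2π)^{−m} ∫_{[0,2π]^m} F(φ) dφ = 4^{−m} Σ_{φ_c ∈ {0, π/2, π, 3π/2}^m} F(φ_c). -/
/-!
The four-point rule `∫₀^{2π} f = (π/2) ∑_{j<4} f (jπ/2)` is exact for trigonometric polynomials of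
degree at most 2: both sides equal `2π a`, because `cos t`, `sin t`, `cos 2t`, `sin 2t` have zero
integral over a period and also sum to zero over the four nodes. Fubini and induction on the number
of variables turn any one-variable rule that is exact on each section of `F` into the product rule
on the cube.
-/

open Real MeasureTheory Set

def IsTrigPolyDegLeTwo (f : ℝ → ℝ) : Prop :=
  ∃ a b c d e : ℝ, ∀ t, f t = a + b * cos t + c * sin t + d * cos (2 * t) + e * sin (2 * t)

section TrigCoefficients

variable {f : ℝ → ℝ} {a b c d e : ℝ}
  (hf : ∀ t, f t = a + b * cos t + c * sin t + d * cos (2 * t) + e * sin (2 * t))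
include hf

theorem integral_trig_deg_two : ∫ t in (0 : ℝ)..2 * π, f t = 2 * π * a := by
  have hint : ∀ g : ℝ → ℝ, Continuous g → IntervalIntegrable g volume 0 (2 * π) :=
    fun g hg => hg.intervalIntegrable _ _
  rw [funext hf, intervalIntegral.integral_add (hint _ (by fun_prop)) (hint _ (by fun_prop)),
    intervalIntegral.integral_add (hint _ (by fun_prop)) (hint _ (by fun_prop)),
    intervalIntegral.integral_add (hint _ (by fun_prop)) (hint _ (by fun_prop)),
    intervalIntegral.integral_add (hint _ (by fun_prop)) (hint _ (by fun_prop))]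
  simp [intervalIntegral.integral_comp_mul_left (fun x => cos x),
    intervalIntegral.integral_comp_mul_left (fun x => sin x),
    show 2 * (2 * π) = 2 * π + 2 * π by ring]

theorem sum_clifford_trig_deg_two : ∑ i : Fin 4, f (i * (π / 2)) = 4 * a := by
  have h3 : (((3 : Fin 4) : ℕ) : ℝ) = 3 := rfl
  simp only [Fin.sum_univ_four, hf]
  norm_num [h3, show 2 * (π / 2) = π by ring, show 3 * (π / 2) = π / 2 + π by ring,
    show 2 * (π / 2 + π) = π + 2 * π by ring, cos_add, sin_add]
  ring

end TrigCoefficients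

theorem IsTrigPolyDegLeTwo.setIntegral_Icc_eq_sum_clifford {f : ℝ → ℝ}
    (hf : IsTrigPolyDegLeTwo f) :
    ∫ t in Icc 0 (2 * π), f t = ∑ i : Fin 4, π / 2 * f (i * (π / 2)) := by
  obtain ⟨a, b, c, d, e, hf⟩ := hf
  rw [integral_Icc_eq_integral_Ioc, ← intervalIntegral.integral_of_le two_pi_pos.le,
    integral_trig_deg_two hf, ← Finset.mul_sum, sum_clifford_trig_deg_two hf]
  ring

theorem setIntegral_Icc_pi_succ {E : Type*} [NormedAddCommGroup E] [NormedSpace ℝ E]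
    {n : ℕ} {a b : ℝ} {F : (Fin (n + 1) → ℝ) → E} (hF : Continuous F) :
    ∫ φ in Icc (fun _ => a) (fun _ => b), F φ
      = ∫ t in Icc a b, ∫ ψ in Icc (fun _ => a) (fun _ => b), F (Fin.cons t ψ) := by
  let e : ℝ × (Fin n → ℝ) ≃ᵐ (Fin (n + 1) → ℝ) :=
    (MeasurableEquiv.piFinSuccAbove (fun _ => ℝ) 0).symm
  have he : MeasurePreserving e :=
    (volume_preserving_piFinSuccAbove (fun _ : Fin (n + 1) => ℝ) 0).symm _
  have he_apply : ∀ p, e p = Fin.cons p.1 p.2 := fun _ => by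
    simp only [e, MeasurableEquiv.piFinSuccAbove_symm_apply, Fin.insertNthEquiv_zero,
      Fin.consEquiv, Equiv.coe_fn_mk]
  have he_Icc : e ⁻¹' Icc (fun _ => a) (fun _ => b)
      = Icc a b ×ˢ Icc (fun _ => a) (fun _ => b) :=
    ((Fin.insertNthOrderIso (fun _ => ℝ) 0).preimage_Icc _ _).trans (Icc_prod_eq _ _)
  have hFi : IntegrableOn F (Icc (fun _ => a) (fun _ => b)) :=
    hF.continuousOn.integrableOn_compact isCompact_Icc
  rw [← he.integrableOn_comp_preimage e.measurableEmbedding, he_Icc] at hFi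
  rw [← he.map_eq, setIntegral_map_equiv, he_Icc, Measure.volume_eq_prod]
  exact (setIntegral_prod _ hFi).trans (by simp only [Function.comp_apply, he_apply])

theorem Fin.sum_pi_succ {n : ℕ} {κ M : Type*} [Fintype κ] [AddCommMonoid M]
    (g : (Fin (n + 1) → κ) → M) :
    ∑ c, g c = ∑ i, ∑ c : Fin n → κ, g (Fin.cons i c) := by
  rw [← (Fin.consEquiv fun _ => κ).sum_comp, Fintype.sum_prod_type]
  rfl

theorem setIntegral_Icc_pi_eq_sum_of_quadrature {κ : Type*} [Fintype κ]
    {P : (ℝ → ℝ) → Prop} {a b : ℝ} (w x : κ → ℝ)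
    (hquad : ∀ f, P f → ∫ t in Icc a b, f t = ∑ i, w i * f (x i))
    (m : ℕ) (F : (Fin m → ℝ) → ℝ) (hF : Continuous F)
    (hP : ∀ (k : Fin m) (φ : Fin m → ℝ), P fun t => F (Function.update φ k t)) :
    ∫ φ in Icc (fun _ => a) (fun _ => b), F φ
      = ∑ c : Fin m → κ, (∏ k, w (c k)) * F fun k => x (c k) := by
  induction m with
  | zero =>
    rw [Subsingleton.eq_univ_of_nonempty (nonempty_Icc.2 fun i => i.elim0), Measure.restrict_univ,
      volume_pi, Measure.pi_of_empty, integral_dirac, Fintype.sum_unique,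
      Fin.prod_univ_zero, one_mul]
    exact congrArg F (Subsingleton.elim _ _)
  | succ n ih =>
    have hsection : ∀ t, ∫ ψ in Icc (fun _ => a) (fun _ => b), F (Fin.cons t ψ)
        = ∑ c : Fin n → κ, (∏ k, w (c k)) * F (Fin.cons t fun k => x (c k)) := fun t =>
      ih _ (hF.comp (continuous_const.finCons continuous_id)) fun k ψ => by
        simpa only [Fin.cons_update] using hP k.succ (Fin.cons t ψ)
    have hfiber : ∀ c : Fin n → κ, ∫ t in Icc a b, F (Fin.cons t fun k => x (c k))
        = ∑ i, w i * F (Fin.cons (x i) fun k => x (c k)) := fun c =>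
      hquad _ (by simpa only [Fin.update_cons_zero] using hP 0 (Fin.cons 0 fun k => x (c k)))
    calc ∫ φ in Icc (fun _ => a) (fun _ => b), F φ
        = ∫ t in Icc a b, ∑ c : Fin n → κ, (∏ k, w (c k)) * F (Fin.cons t fun k => x (c k)) := by
          rw [setIntegral_Icc_pi_succ hF]
          simp only [hsection]
      _ = ∑ c : Fin n → κ, (∏ k, w (c k)) * ∫ t in Icc a b, F (Fin.cons t fun k => x (c k)) := by
          rw [integral_finsetSum]
          · simp only [integral_const_mul]
          · intro c _
            exact ((hF.comp (continuous_id.finCons continuous_const)).continuousOn.integrableOn_compact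
              isCompact_Icc).const_mul _
      _ = ∑ c : Fin (n + 1) → κ, (∏ k, w (c k)) * F fun k => x (c k) := by
          simp only [hfiber, Finset.mul_sum, Fin.sum_pi_succ _, Fin.prod_univ_succ, Fin.cons_zero,
            Fin.cons_succ]
          rw [Finset.sum_comm]
          refine Finset.sum_congr rfl fun i _ => Finset.sum_congr rfl fun c _ => ?_
          have hnode : (fun k => x (Fin.cons (α := fun _ => κ) i c k))
              = Fin.cons (x i) fun k => x (c k) :=
            Fin.comp_cons x i c
          rw [hnode]
          ring

theorem stmt_1_general (m : ℕ) (F : (Fin m → ℝ) → ℝ) (hFcont : Continuous F)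
    (hF : ∀ (k : Fin m) (φ : Fin m → ℝ), ∃ a b c d e : ℝ, ∀ t : ℝ,
      F (Function.update φ k t)
        = a + b * Real.cos t + c * Real.sin t
          + d * Real.cos (2 * t) + e * Real.sin (2 * t)) :
    (1 / (2 * Real.pi) ^ m) *
        ∫ φ in Set.univ.pi (fun _ : Fin m => Set.Icc (0:ℝ) (2 * Real.pi)), F φ
      = (1 / 4 ^ m) *
        ∑ c : Fin m → Fin 4, F (fun k => ((c k : ℕ) : ℝ) * (Real.pi / 2)) := by
  have hcube := setIntegral_Icc_pi_eq_sum_of_quadrature (P := IsTrigPolyDegLeTwo)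
    (fun _ => π / 2) (fun i : Fin 4 => ((i : ℕ) : ℝ) * (π / 2))
    (fun _ hf => hf.setIntegral_Icc_eq_sum_clifford) m F hFcont hF
  simp only [Finset.prod_const, Finset.card_univ, Fintype.card_fin, ← Finset.mul_sum] at hcube
  rw [pi_univ_Icc, hcube, ← mul_assoc, ← one_div_pow, ← one_div_pow, ← mul_pow]
  congr 2
  field_simp
  ring

theorem stmt_1 (m : ℕ) (hm : 1 ≤ m) (F : (Fin m → ℝ) → ℝ) (hFcont : Continuous F)
    (hF : ∀ (k : Fin m) (φ : Fin m → ℝ), ∃ a b c d e : ℝ, ∀ t : ℝ,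
      F (Function.update φ k t)
        = a + b * Real.cos t + c * Real.sin t
          + d * Real.cos (2 * t) + e * Real.sin (2 * t)) :
    (1 / (2 * Real.pi) ^ m) *
        ∫ φ in Set.univ.pi (fun _ : Fin m => Set.Icc (0:ℝ) (2 * Real.pi)), F φ
      = (1 / 4 ^ m) *
        ∑ c : Fin m → Fin 4, F (fun k => ((c k : ℕ) : ℝ) * (Real.pi / 2)) :=
  stmt_1_general m F hFcont hF
end

section
/- Let ρ, O, U₀, U₁ be d × d complex matrices with ρ and O Hermitian, and for φ ∈ ℝ set U(φ) = cos(φ/2)·U₀ + sin(φ/2)·U₁ and L(φ) = Re Tr[ρ · U(φ)† · O · U(φ)]. Then L is a trigonometric polynomial of degree at most 1: there exist real numbers a, b, c such that L(φ) = a + b·cos φ + c·sin φ for all φ ∈ ℝ. -/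
open Matrix

theorem stmt_4 (d : ℕ) (ρ O U₀ U₁ : Matrix (Fin d) (Fin d) ℂ)
    (hρ : ρ.IsHermitian) (hO : O.IsHermitian) :
    ∃ a b c : ℝ, ∀ φ : ℝ,
      (ρ * ((Real.cos (φ / 2) : ℂ) • U₀ + (Real.sin (φ / 2) : ℂ) • U₁)ᴴ * O *
          ((Real.cos (φ / 2) : ℂ) • U₀ + (Real.sin (φ / 2) : ℂ) • U₁)).trace.re
        = a + b * Real.cos φ + c * Real.sin φ := by
  set t00 := (ρ * U₀ᴴ * O * U₀).trace.re
  set t11 := (ρ * U₁ᴴ * O * U₁).trace.re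
  set t01 := (ρ * U₀ᴴ * O * U₁).trace.re
  set t10 := (ρ * U₁ᴴ * O * U₀).trace.re
  refine ⟨(t00 + t11) / 2, (t00 - t11) / 2, (t01 + t10) / 2, fun φ => ?_⟩
  have hc : Real.cos φ = 2 * Real.cos (φ / 2) ^ 2 - 1 := by
    have := Real.cos_sq (φ / 2)
    have h2 : 2 * (φ / 2) = φ := by ring
    rw [h2] at this; linarith
  have hs : Real.sin φ = 2 * Real.sin (φ / 2) * Real.cos (φ / 2) := by
    have := Real.sin_two_mul (φ / 2)
    have h2 : 2 * (φ / 2) = φ := by ring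
    rwa [h2] at this
  have hpyth : Real.sin (φ / 2) ^ 2 + Real.cos (φ / 2) ^ 2 = 1 :=
    Real.sin_sq_add_cos_sq (φ / 2)
  simp only [conjTranspose_add, conjTranspose_smul, Complex.star_def,
    Complex.conj_ofReal, Matrix.mul_add, Matrix.add_mul, Matrix.mul_smul,
    Matrix.smul_mul, trace_add, trace_smul, smul_eq_mul, Complex.add_re,
    Complex.mul_re, Complex.ofReal_re, Complex.ofReal_im, Complex.mul_im]
  rw [hc, hs]
  linear_combination t11 * hpyth
end

section
/- Let m ≥ 1 and let F : ℝ^m → ℝ be such that for each index k, when all variables other than φ_k are fixed, the resulting single-variable function is of the form a + b·cos φ_k + c·sin φ_k (with coefficients a, b, c depending on the other variables). Then the mean of F² over [0,2π]^m equals the average of F² over the Clifford points: (2π)^{−m} ∫_{[0,2π]^m} F(φ)² dφ = 4^{−m} Σ_{φ_c ∈ {0, π/2, π, 3π/2}^m} F(φ_c)². -/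
/-!
In each variable separately, `F²` is a trigonometric polynomial of degree at most two, and the
four-point rule at the angles `0, π/2, π, 3π/2` integrates such polynomials over `[0, 2π]` exactly.
Integrating out one variable at a time (Fubini) therefore turns the integral over the cube into the
sum over the Clifford points, each step contributing a factor `π / 2`.
-/

open MeasureTheory Real Set

noncomputable def cliffordAngle (j : Fin 4) : ℝ := ((j : ℕ) : ℝ) * (π / 2)

def IsSeparatelyTrigAffine {ι : Type*} [DecidableEq ι] (F : (ι → ℝ) → ℝ) : Prop :=
  ∀ (k : ι) (φ : ι → ℝ), ∃ a b c : ℝ, ∀ t : ℝ,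
    F (Function.update φ k t) = a + b * cos t + c * sin t

theorem integral_sq_trigAffine (a b c : ℝ) :
    ∫ t in (0 : ℝ)..2 * π, (a + b * cos t + c * sin t) ^ 2
      = 2 * π * a ^ 2 + π * b ^ 2 + π * c ^ 2 := by
  have hexpand : ∀ t : ℝ, (a + b * cos t + c * sin t) ^ 2
      = a ^ 2 + 2 * a * b * cos t + 2 * a * c * sin t + b ^ 2 * cos t ^ 2
        + c ^ 2 * sin t ^ 2 + 2 * b * c * (sin t * cos t) := fun t => by ring
  simp_rw [hexpand]
  rw [intervalIntegral.integral_add, intervalIntegral.integral_add,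
    intervalIntegral.integral_add, intervalIntegral.integral_add,
    intervalIntegral.integral_add, intervalIntegral.integral_const,
    intervalIntegral.integral_const_mul, intervalIntegral.integral_const_mul,
    intervalIntegral.integral_const_mul, intervalIntegral.integral_const_mul,
    intervalIntegral.integral_const_mul, integral_cos, integral_sin, integral_cos_sq,
    integral_sin_sq, integral_sin_mul_cos₁]
  · simp only [sin_two_pi, cos_two_pi, sin_zero, cos_zero, smul_eq_mul]
    ring
  all_goals exact Continuous.intervalIntegrable (by fun_prop) _ _

theorem sum_sq_trigAffine_cliffordAngle (a b c : ℝ) :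
    π / 2 * ∑ j : Fin 4, (a + b * cos (cliffordAngle j) + c * sin (cliffordAngle j)) ^ 2
      = 2 * π * a ^ 2 + π * b ^ 2 + π * c ^ 2 := by
  have h2 : (2 : ℝ) * (π / 2) = π := by ring
  have h3 : (3 : ℝ) * (π / 2) = π + π / 2 := by ring
  simp only [Fin.sum_univ_four, cliffordAngle, Fin.val_zero, Fin.val_one, Fin.val_two]
  norm_num [show ((3 : Fin 4) : ℕ) = 3 from rfl, h2, h3, cos_add, sin_add]
  ring

theorem setIntegral_Icc_sq_eq_sum_cliffordAngle {g : ℝ → ℝ} {a b c : ℝ}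
    (hg : ∀ t, g t = a + b * cos t + c * sin t) :
    ∫ t in Icc 0 (2 * π), g t ^ 2 = π / 2 * ∑ j : Fin 4, g (cliffordAngle j) ^ 2 := by
  simp_rw [hg]
  rw [integral_Icc_eq_integral_Ioc, ← intervalIntegral.integral_of_le (by positivity),
    integral_sq_trigAffine, sum_sq_trigAffine_cliffordAngle]

theorem integral_pi_fin_succ_eq_integral_cons {α : Type*} [MeasurableSpace α] (μ : Measure α)
    [SigmaFinite μ] {m : ℕ} {f : (Fin (m + 1) → α) → ℝ}
    (hf : Integrable f (Measure.pi fun _ => μ)) :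
    ∫ φ, f φ ∂(Measure.pi fun _ => μ)
      = ∫ x, ∫ y, f (Fin.cons x y) ∂(Measure.pi fun _ => μ) ∂μ := by
  have hmp := (measurePreserving_piFinSuccAbove (fun _ : Fin (m + 1) => μ) 0).symm
  rw [← hmp.integral_comp', integral_prod]
  · simp only [MeasurableEquiv.piFinSuccAbove_symm_apply, Fin.insertNthEquiv, Equiv.coe_fn_mk,
      Fin.insertNth_zero, cast_eq, Fin.zero_succAbove]
  · exact hmp.integrable_comp_emb (MeasurableEquiv.measurableEmbedding _) |>.mpr hf

theorem Continuous.integrable_pi_restrict_Icc {m : ℕ} {f : (Fin m → ℝ) → ℝ} (hf : Continuous f)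
    (a b : ℝ) : Integrable f (Measure.pi fun _ => volume.restrict (Icc a b)) := by
  rw [← Measure.restrict_pi_pi, ← volume_pi]
  exact hf.continuousOn.integrableOn_compact (isCompact_univ_pi fun _ => isCompact_Icc)

namespace IsSeparatelyTrigAffine

variable {m : ℕ} {F : (Fin (m + 1) → ℝ) → ℝ}

theorem cons (hF : IsSeparatelyTrigAffine F) (x : ℝ) :
    IsSeparatelyTrigAffine fun y : Fin m → ℝ => F (Fin.cons x y) := by
  intro k y
  obtain ⟨a, b, c, h⟩ := hF k.succ (Fin.cons x y)
  exact ⟨a, b, c, fun t => by rw [← h, ← Fin.cons_update]⟩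

theorem exists_cons_zero (hF : IsSeparatelyTrigAffine F) (y : Fin m → ℝ) :
    ∃ a b c : ℝ, ∀ t : ℝ, F (Fin.cons t y) = a + b * cos t + c * sin t := by
  obtain ⟨a, b, c, h⟩ := hF 0 (Fin.cons 0 y)
  exact ⟨a, b, c, fun t => by rw [← h, Fin.update_cons_zero]⟩

end IsSeparatelyTrigAffine

theorem Fintype.sum_fin_succ_pi {β M : Type*} [Fintype β] [AddCommMonoid M] {m : ℕ}
    (f : (Fin (m + 1) → β) → M) :
    ∑ d, f d = ∑ j, ∑ c : Fin m → β, f (Fin.cons j c) := by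
  rw [← (Fin.consEquiv fun _ => β).sum_comp, Fintype.sum_prod_type]
  rfl

theorem integral_sq_pi_Icc_eq_sum_cliffordAngle :
    ∀ {m : ℕ} {F : (Fin m → ℝ) → ℝ}, Continuous F → IsSeparatelyTrigAffine F →
    ∫ φ, F φ ^ 2 ∂(Measure.pi fun _ : Fin m => volume.restrict (Icc 0 (2 * π)))
      = (π / 2) ^ m * ∑ c : Fin m → Fin 4, F (fun k => cliffordAngle (c k)) ^ 2
  | 0, F, _, _ => by
    rw [Measure.pi_of_empty (x := fun k => cliffordAngle ((default : Fin 0 → Fin 4) k)),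
      integral_dirac, Fintype.sum_unique, pow_zero, one_mul]
    exact congrArg (F · ^ 2) (Subsingleton.elim _ _)
  | m + 1, F, hFc, hF => by
    have hFcons (x : ℝ) : Continuous fun y : Fin m → ℝ => F (Fin.cons x y) := by fun_prop
    rw [integral_pi_fin_succ_eq_integral_cons _
      (Continuous.integrable_pi_restrict_Icc (by fun_prop) _ _)]
    simp_rw [integral_sq_pi_Icc_eq_sum_cliffordAngle (hFcons _) (hF.cons _)]
    rw [integral_const_mul, integral_finsetSum _ fun c _ =>
      (Continuous.integrableOn_Icc (by fun_prop))]
    have houter (d : Fin m → Fin 4) :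
        ∫ x in Icc 0 (2 * π), F (Fin.cons x fun k => cliffordAngle (d k)) ^ 2
          = π / 2 * ∑ j, F (Fin.cons (cliffordAngle j) fun k => cliffordAngle (d k)) ^ 2 := by
      obtain ⟨a, b, c, h⟩ := hF.exists_cons_zero fun k => cliffordAngle (d k)
      exact setIntegral_Icc_sq_eq_sum_cliffordAngle h
    have hcons (j : Fin 4) (c : Fin m → Fin 4) :
        (fun k => cliffordAngle ((Fin.cons j c : Fin (m + 1) → Fin 4) k))
          = Fin.cons (cliffordAngle j) fun k => cliffordAngle (c k) :=
      Fin.comp_cons cliffordAngle j c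
    simp_rw [houter, ← Finset.mul_sum, Fintype.sum_fin_succ_pi, hcons]
    rw [Finset.sum_comm, pow_succ, mul_assoc]

theorem stmt_17_general (m : ℕ) (F : (Fin m → ℝ) → ℝ) (hFcont : Continuous F)
    (hF : ∀ (k : Fin m) (φ : Fin m → ℝ), ∃ a b c : ℝ, ∀ t : ℝ,
      F (Function.update φ k t) = a + b * Real.cos t + c * Real.sin t) :
    (1 / (2 * Real.pi) ^ m) *
        ∫ φ in Set.univ.pi (fun _ : Fin m => Set.Icc (0:ℝ) (2 * Real.pi)), (F φ) ^ 2
      = (1 / 4 ^ m) *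
        ∑ c : Fin m → Fin 4, (F (fun k => ((c k : ℕ) : ℝ) * (Real.pi / 2))) ^ 2 := by
  have hnormalize : 1 / (2 * π) ^ m * (π / 2) ^ m = 1 / 4 ^ m := by
    rw [one_div_mul_eq_div, ← div_pow, one_div, ← inv_pow]
    congr 1
    field_simp
    norm_num
  rw [volume_pi, Measure.restrict_pi_pi, integral_sq_pi_Icc_eq_sum_cliffordAngle hFcont hF,
    ← mul_assoc, hnormalize]
  rfl

theorem stmt_17 (m : ℕ) (hm : 1 ≤ m) (F : (Fin m → ℝ) → ℝ) (hFcont : Continuous F)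
    (hF : ∀ (k : Fin m) (φ : Fin m → ℝ), ∃ a b c : ℝ, ∀ t : ℝ,
      F (Function.update φ k t) = a + b * Real.cos t + c * Real.sin t) :
    (1 / (2 * Real.pi) ^ m) *
        ∫ φ in Set.univ.pi (fun _ : Fin m => Set.Icc (0:ℝ) (2 * Real.pi)), (F φ) ^ 2
      = (1 / 4 ^ m) *
        ∑ c : Fin m → Fin 4, (F (fun k => ((c k : ℕ) : ℝ) * (Real.pi / 2))) ^ 2 :=
  stmt_17_general m F hFcont hF
end

section
/- Let m ≥ 1, ε ≥ 0, and let F : ℝ^m → ℝ be such that for each index k, when all variables other than φ_k are fixed, the resulting single-variable function is of the form a + b·cos φ_k + c·sin φ_k (with coefficients depending on the other variables). Assume that F(φ_c) ∈ {−1, 0, 1} for every Clifford point φ_c ∈ {0, π/2, π, 3π/2}^m, that the mean of F over [0,2π]^m is zero, and that the mean of F² over [0,2π]^m is at most ε. Then the fraction of Clifford points at which F is nonzero is at most ε: |{φ_c ∈ {0, π/2, π, 3π/2}^m : F(φ_c) ≠ 0}| / 4^m ≤ ε. -/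
/-!
On every coordinate line `F` is a trigonometric polynomial of degree one, so `F ^ 2` is one of
degree two. The four-point rule with nodes `0, π/2, π, 3π/2` and weight `π/2` integrates such
polynomials exactly over `[0, 2π]`; applying it one coordinate at a time (Fubini) shows that the
mean of `F ^ 2` over the torus is the average of `F ^ 2` over the Clifford points. As `F` takes
values in `{-1, 0, 1}` there, that average is the fraction of Clifford points where `F ≠ 0`.
-/

open Real MeasureTheory Finset

section TensorQuadrature

variable {α : Type*} [MeasurableSpace α]

theorem integral_pi_fin_succ {m : ℕ} (ν : Measure α) [SigmaFinite ν]
    {G : (Fin (m + 1) → α) → ℝ} (hG : Integrable G (Measure.pi fun _ => ν)) :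
    ∫ φ, G φ ∂(Measure.pi fun _ => ν) = ∫ p, ∫ t, G (Fin.cons t p) ∂ν ∂(Measure.pi fun _ => ν) := by
  have he := (measurePreserving_piFinSuccAbove (fun _ : Fin (m + 1) => ν) 0).symm
  have hcons : ⇑(MeasurableEquiv.piFinSuccAbove (fun _ : Fin (m + 1) => α) 0).symm =
      fun z => Fin.cons z.1 z.2 := by
    funext z
    simp [MeasurableEquiv.piFinSuccAbove_symm_apply, Fin.insertNthEquiv, Fin.insertNth_zero']
  rw [← he.integral_comp' G, hcons]
  refine integral_prod_symm (fun z : α × (Fin m → α) => G (Fin.cons z.1 z.2)) ?_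
  have := (he.integrable_comp_emb (MeasurableEquiv.measurableEmbedding _)).2 hG
  rwa [hcons] at this

theorem sum_pi_fin_succ {ι M : Type*} [Fintype ι] [AddCommMonoid M] {m : ℕ}
    (f : (Fin (m + 1) → ι) → M) :
    ∑ c, f c = ∑ j, ∑ c : Fin m → ι, f (Fin.cons j c) := by
  rw [← Fintype.sum_prod_type']
  exact (Fintype.sum_equiv (Fin.consEquiv fun _ => ι) _ _ fun _ => rfl).symm

theorem integrable_pi_restrict_of_continuous {m : ℕ} {s : Set ℝ} (hs : IsCompact s)
    {G : (Fin m → ℝ) → ℝ} (hG : Continuous G) :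
    Integrable G (Measure.pi fun _ => volume.restrict s) := by
  rw [← Measure.restrict_pi_pi]
  exact hG.continuousOn.integrableOn_compact (isCompact_univ_pi fun _ => hs)

variable {ι : Type*} [Fintype ι]

theorem integral_pi_eq_sum_of_forall_update {s : Set ℝ} (hs : IsCompact s) (w : ℝ)
    (x : ι → ℝ) {m : ℕ} {G : (Fin m → ℝ) → ℝ} (hG : Continuous G)
    (hexact : ∀ k φ, ∫ t in s, G (Function.update φ k t) =
      w * ∑ j, G (Function.update φ k (x j))) :
    ∫ φ, G φ ∂(Measure.pi fun _ => volume.restrict s) = w ^ m * ∑ c : Fin m → ι, G (x ∘ c) := by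
  induction m with
  | zero =>
    have hconst : ∀ φ, G φ = G (x ∘ finZeroElim) := fun φ => congrArg G (Subsingleton.elim _ _)
    simp [hconst, measureReal_def]
  | succ m ih =>
    have hslice : ∀ p, ∫ t in s, G (Fin.cons t p) = w * ∑ j, G (Fin.cons (x j) p) := fun p => by
      simpa [Fin.update_cons_zero] using hexact 0 (Fin.cons 0 p)
    have hcont : ∀ j, Continuous fun p : Fin m → ℝ => G (Fin.cons (x j) p) := fun j =>
      hG.comp (continuous_const.finCons continuous_id)
    have hfix : ∀ j, ∫ p, G (Fin.cons (x j) p) ∂(Measure.pi fun _ => volume.restrict s) =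
        w ^ m * ∑ c : Fin m → ι, G (Fin.cons (x j) (x ∘ c)) := fun j =>
      ih (hcont j) fun k φ => by simpa [Fin.cons_update] using hexact k.succ (Fin.cons (x j) φ)
    rw [integral_pi_fin_succ _ (integrable_pi_restrict_of_continuous hs hG),
      integral_congr_ae (ae_of_all _ hslice), integral_const_mul,
      integral_finsetSum _ fun j _ => integrable_pi_restrict_of_continuous hs (hcont j),
      Finset.sum_congr rfl fun j _ => hfix j, sum_pi_fin_succ, ← mul_sum, pow_succ']
    simp [Fin.comp_cons, mul_assoc]

end TensorQuadrature

noncomputable def trigPolyTwo (a b c d e t : ℝ) : ℝ :=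
  a + b * cos t + c * sin t + d * cos (2 * t) + e * sin (2 * t)

theorem integral_trigPolyTwo (a b c d e : ℝ) :
    ∫ t in (0)..(2 * π), trigPolyTwo a b c d e t = 2 * π * a := by
  have hint : ∀ f : ℝ → ℝ, Continuous f → IntervalIntegrable f volume 0 (2 * π) :=
    fun f hf => hf.intervalIntegrable _ _
  unfold trigPolyTwo
  rw [intervalIntegral.integral_add, intervalIntegral.integral_add, intervalIntegral.integral_add,
    intervalIntegral.integral_add]
  all_goals try exact hint _ (by fun_prop)
  have hsin : sin (2 * (2 * π)) = 0 := by rw [two_mul, sin_add_two_pi, sin_two_pi]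
  have hcos : cos (2 * (2 * π)) = 1 := by rw [two_mul, cos_add_two_pi, cos_two_pi]
  simp [intervalIntegral.integral_comp_mul_left, hsin, hcos]

theorem sum_trigPolyTwo (a b c d e : ℝ) :
    ∑ j : Fin 4, trigPolyTwo a b c d e ((j : ℕ) * (π / 2)) = 4 * a := by
  have h1 : 2 * (π / 2) = π := by ring
  have h3 : 3 * (π / 2) = π / 2 + π := by ring
  have h6 : 2 * (π / 2 + π) = π + 2 * π := by ring
  simp [Fin.sum_univ_four, trigPolyTwo, h1, h3, h6, cos_add_pi, sin_add_pi, cos_add_two_pi,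
    sin_add_two_pi]
  ring

theorem integral_Icc_trigPolyTwo_eq_sum (a b c d e : ℝ) :
    ∫ t in Set.Icc 0 (2 * π), trigPolyTwo a b c d e t =
      π / 2 * ∑ j : Fin 4, trigPolyTwo a b c d e ((j : ℕ) * (π / 2)) := by
  rw [integral_Icc_eq_integral_Ioc, ← intervalIntegral.integral_of_le (by positivity),
    integral_trigPolyTwo, sum_trigPolyTwo]
  ring

theorem sq_trig_eq_trigPolyTwo (a b c t : ℝ) :
    (a + b * cos t + c * sin t) ^ 2 =
      trigPolyTwo (a ^ 2 + (b ^ 2 + c ^ 2) / 2) (2 * a * b) (2 * a * c) ((b ^ 2 - c ^ 2) / 2)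
        (b * c) t := by
  rw [trigPolyTwo, cos_two_mul, sin_two_mul]
  linear_combination c ^ 2 * sin_sq_add_cos_sq t

theorem sum_sq_eq_card_ne_zero {α : Type*} [Fintype α] (f : α → ℝ)
    (hf : ∀ x, f x = -1 ∨ f x = 0 ∨ f x = 1) :
    ∑ x, f x ^ 2 = #{x | f x ≠ 0} := by
  rw [← sum_boole]
  refine sum_congr rfl fun x _ => ?_
  rcases hf x with h | h | h <;> simp [h]

open scoped Classical in
theorem stmt_18_general (m : ℕ) (ε : ℝ)
    (F : (Fin m → ℝ) → ℝ) (hFcont : Continuous F)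
    (hF : ∀ (k : Fin m) (φ : Fin m → ℝ), ∃ a b c : ℝ, ∀ t : ℝ,
      F (Function.update φ k t) = a + b * Real.cos t + c * Real.sin t)
    (hclif : ∀ c : Fin m → Fin 4,
      F (fun k => ((c k : ℕ) : ℝ) * (Real.pi / 2)) = -1 ∨
      F (fun k => ((c k : ℕ) : ℝ) * (Real.pi / 2)) = 0 ∨
      F (fun k => ((c k : ℕ) : ℝ) * (Real.pi / 2)) = 1)
    (hvar : (1 / (2 * Real.pi) ^ m) *
        ∫ φ in Set.univ.pi (fun _ : Fin m => Set.Icc (0:ℝ) (2 * Real.pi)), (F φ) ^ 2 ≤ ε) :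
    ((Finset.univ.filter (fun c : Fin m → Fin 4 =>
        F (fun k => ((c k : ℕ) : ℝ) * (Real.pi / 2)) ≠ 0)).card : ℝ) / 4 ^ m ≤ ε := by
  have hexact : ∀ k φ, ∫ t in Set.Icc 0 (2 * π), F (Function.update φ k t) ^ 2 =
      π / 2 * ∑ j : Fin 4, F (Function.update φ k ((j : ℕ) * (π / 2))) ^ 2 := fun k φ => by
    obtain ⟨a, b, c, hsection⟩ := hF k φ
    simp only [hsection, sq_trig_eq_trigPolyTwo]
    exact integral_Icc_trigPolyTwo_eq_sum ..
  have hquad := integral_pi_eq_sum_of_forall_update isCompact_Icc (π / 2)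
    (fun j : Fin 4 => (j : ℕ) * (π / 2)) (G := fun φ => F φ ^ 2) (hFcont.pow 2) hexact
  simp only [← Measure.restrict_pi_pi, ← volume_pi, Function.comp_def] at hquad
  rw [sum_sq_eq_card_ne_zero _ hclif] at hquad
  have hscale : ∀ N : ℝ, 1 / (2 * π) ^ m * ((π / 2) ^ m * N) = N / 4 ^ m := fun N => by
    rw [show (4 : ℝ) ^ m = 2 ^ m * 2 ^ m by rw [← mul_pow]; norm_num, mul_pow, div_pow]
    field_simp
  rwa [hquad, hscale] at hvar

open scoped Classical in
theorem stmt_18 (m : ℕ) (hm : 1 ≤ m) (ε : ℝ) (hε : 0 ≤ ε)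
    (F : (Fin m → ℝ) → ℝ) (hFcont : Continuous F)
    (hF : ∀ (k : Fin m) (φ : Fin m → ℝ), ∃ a b c : ℝ, ∀ t : ℝ,
      F (Function.update φ k t) = a + b * Real.cos t + c * Real.sin t)
    (hclif : ∀ c : Fin m → Fin 4,
      F (fun k => ((c k : ℕ) : ℝ) * (Real.pi / 2)) = -1 ∨
      F (fun k => ((c k : ℕ) : ℝ) * (Real.pi / 2)) = 0 ∨
      F (fun k => ((c k : ℕ) : ℝ) * (Real.pi / 2)) = 1)
    (hmean : (1 / (2 * Real.pi) ^ m) *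
        ∫ φ in Set.univ.pi (fun _ : Fin m => Set.Icc (0:ℝ) (2 * Real.pi)), F φ = 0)
    (hvar : (1 / (2 * Real.pi) ^ m) *
        ∫ φ in Set.univ.pi (fun _ : Fin m => Set.Icc (0:ℝ) (2 * Real.pi)), (F φ) ^ 2 ≤ ε) :
    ((Finset.univ.filter (fun c : Fin m → Fin 4 =>
        F (fun k => ((c k : ℕ) : ℝ) * (Real.pi / 2)) ≠ 0)).card : ℝ) / 4 ^ m ≤ ε :=
  stmt_18_general m ε F hFcont hF hclif hvar
end

section
/- Let m ≥ 1, ε ≥ 0, and let F : ℝ^m → ℝ be such that for each index k, when all variables other than φ_k are fixed, the resulting single-variable function is of the form a + b·cos φ_k + c·sin φ_k (with coefficients depending on the other variables). Assume that F(φ_c) ∈ {−1, 0, 1} for every Clifford point φ_c ∈ {0, π/2, π, 3π/2}^m, and that the mean of F² over [0,2π]^m is at most ε. Fix an index k and define the gradient component via the parameter shift G_k(φ) = (1/2)·F(φ + (π/2)·e_k) − (1/2)·F(φ − (π/2)·e_k), where e_k is the k-th standard basis vector (so that G_k = ∂F/∂φ_k). Then the fraction of Clifford points at which G_k is nonzero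 is at most 4ε: |{φ_c ∈ {0, π/2, π, 3π/2}^m : G_k(φ_c) ≠ 0}| / 4^m ≤ 4ε. -/
/-!
In each variable `F ^ 2` is a trigonometric polynomial of degree at most two, and the
four-point rule at `0, π/2, π, 3π/2` integrates such polynomials exactly over a period. Hence
the mean of `F ^ 2` over the torus equals the average of `F ^ 2` over the Clifford points,
which, as `F` takes values in `{-1, 0, 1}` there, is the fraction of Clifford points where
`F ≠ 0`. The parameter shift moves Clifford points to Clifford points, and `G_k(c) ≠ 0` forces
`F ≠ 0` at `c + e_k` or `c - e_k`; so `G_k` is nonzero on at most twice as many Clifford points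
as `F`, giving the bound `2ε ≤ 4ε`.
-/

open Real MeasureTheory Finset

lemma sum_fin_four_trig_sq (a b c : ℝ) :
    ∑ j : Fin 4, (a + b * cos ((j : ℕ) * (π / 2)) + c * sin ((j : ℕ) * (π / 2))) ^ 2
      = 4 * a ^ 2 + 2 * b ^ 2 + 2 * c ^ 2 := by
  simp only [Fin.sum_univ_four, Fin.val_zero, Fin.val_one, Fin.val_two,
    show ((3 : Fin 4) : ℕ) = 3 from rfl]
  push_cast
  rw [show (3 : ℝ) * (π / 2) = π / 2 + π by ring, show (2 : ℝ) * (π / 2) = π by ring]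
  simp only [zero_mul, cos_zero, sin_zero, one_mul, cos_pi_div_two, sin_pi_div_two, cos_pi, sin_pi,
    cos_add_pi, sin_add_pi]
  ring

lemma setIntegral_Icc_trig_sq (a b c : ℝ) :
    ∫ t in Set.Icc 0 (2 * π), (a + b * cos t + c * sin t) ^ 2
      = π / 2 * (4 * a ^ 2 + 2 * b ^ 2 + 2 * c ^ 2) := by
  rw [integral_Icc_eq_integral_Ioc, ← intervalIntegral.integral_of_le two_pi_pos.le]
  have expand : ∀ t, (a + b * cos t + c * sin t) ^ 2 = a ^ 2 + b ^ 2 * cos t ^ 2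
      + c ^ 2 * sin t ^ 2 + 2 * a * b * cos t + 2 * a * c * sin t
      + 2 * b * c * (sin t * cos t) := fun t => by ring
  simp_rw [expand]
  simp (disch := apply Continuous.intervalIntegrable; fun_prop) only
    [intervalIntegral.integral_add, intervalIntegral.integral_const_mul,
    intervalIntegral.integral_const, integral_cos_sq, integral_sin_sq, integral_cos,
    integral_sin, integral_sin_mul_cos₁]
  simp only [cos_two_pi, sin_two_pi, cos_zero, sin_zero]
  ring

lemma setIntegral_univ_pi_Icc_succ {n : ℕ} {a b : ℝ} {g : (Fin (n + 1) → ℝ) → ℝ}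
    (hg : Continuous g) :
    ∫ φ in Set.univ.pi (fun _ => Set.Icc a b), g φ
      = ∫ t in Set.Icc a b,
          ∫ y in Set.univ.pi (fun _ : Fin n => Set.Icc a b), g (Fin.cons t y) := by
  set e : ℝ × (Fin n → ℝ) ≃ᵐ (Fin (n + 1) → ℝ) :=
    (MeasurableEquiv.piFinSuccAbove (fun _ => ℝ) 0).symm
  have he : MeasurePreserving e :=
    (volume_preserving_piFinSuccAbove (fun _ : Fin (n + 1) => ℝ) 0).symm _
  have he_apply : ∀ p, e p = Fin.cons p.1 p.2 := fun _ => by simp [e]; rfl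
  have hpre : e ⁻¹' Set.univ.pi (fun _ => Set.Icc a b)
      = Set.Icc a b ×ˢ Set.univ.pi (fun _ : Fin n => Set.Icc a b) := by
    ext p
    simp only [Set.mem_preimage, he_apply, Set.mem_univ_pi, Fin.forall_fin_succ, Fin.cons_zero,
      Fin.cons_succ, Set.mem_prod]
  rw [← he.map_eq, setIntegral_map_equiv, hpre, Measure.volume_eq_prod, setIntegral_prod]
  · simp only [he_apply]
  · refine ContinuousOn.integrableOn_compact
      (isCompact_Icc.prod (isCompact_univ_pi fun _ => isCompact_Icc)) (Continuous.continuousOn ?_)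
    simp only [he_apply]
    fun_prop

noncomputable def cliffordPoint {m : ℕ} (c : Fin m → Fin 4) : Fin m → ℝ :=
  fun j => (c j : ℕ) * (π / 2)

lemma cliffordPoint_cons {n : ℕ} (j : Fin 4) (c : Fin n → Fin 4) :
    cliffordPoint (Fin.cons j c : Fin (n + 1) → Fin 4)
      = Fin.cons ((j : ℕ) * (π / 2)) (cliffordPoint c) := by
  ext i
  cases i using Fin.cases <;> rfl

def IsTrigMultiaffine {m : ℕ} (F : (Fin m → ℝ) → ℝ) : Prop :=
  ∀ (k : Fin m) (φ : Fin m → ℝ), ∃ a b c : ℝ, ∀ t : ℝ,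
    F (Function.update φ k t) = a + b * cos t + c * sin t

namespace IsTrigMultiaffine

lemma comp_cons {n : ℕ} {F : (Fin (n + 1) → ℝ) → ℝ} (hF : IsTrigMultiaffine F) (t : ℝ) :
    IsTrigMultiaffine fun y : Fin n → ℝ => F (Fin.cons t y) := by
  intro k φ
  obtain ⟨a, b, c, habc⟩ := hF k.succ (Fin.cons t φ)
  exact ⟨a, b, c, fun s => by simpa only [← Fin.cons_update] using habc s⟩

lemma setIntegral_sq_cons {n : ℕ} {F : (Fin (n + 1) → ℝ) → ℝ} (hF : IsTrigMultiaffine F)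
    (y : Fin n → ℝ) :
    ∫ t in Set.Icc 0 (2 * π), F (Fin.cons t y) ^ 2
      = π / 2 * ∑ j : Fin 4, F (Fin.cons ((j : ℕ) * (π / 2)) y) ^ 2 := by
  obtain ⟨a, b, c, habc⟩ := hF 0 (Fin.cons 0 y)
  simp only [Fin.update_cons_zero] at habc
  simp only [habc, setIntegral_Icc_trig_sq, sum_fin_four_trig_sq]

theorem setIntegral_sq {m : ℕ} {F : (Fin m → ℝ) → ℝ} (hF : IsTrigMultiaffine F)
    (hFc : Continuous F) :
    ∫ φ in Set.univ.pi (fun _ : Fin m => Set.Icc 0 (2 * π)), F φ ^ 2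
      = (π / 2) ^ m * ∑ c, F (cliffordPoint c) ^ 2 := by
  induction m with
  | zero =>
    have huniv : Set.univ.pi (fun _ : Fin 0 => Set.Icc (0 : ℝ) (2 * π)) = Set.univ :=
      Set.eq_univ_of_forall fun _ => Set.mem_univ_pi.2 fun i => i.elim0
    simp only [huniv, Measure.restrict_univ, integral_unique, Measure.real, volume_pi,
      Measure.pi_empty_univ, ENNReal.toReal_one, one_smul, pow_zero, one_mul, univ_unique,
      sum_singleton]
    exact congrArg (F · ^ 2) (Subsingleton.elim _ _)
  | succ n ih =>
    have hFc_cons (t : ℝ) : Continuous fun y : Fin n → ℝ => F (Fin.cons t y) := by fun_prop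
    rw [setIntegral_univ_pi_Icc_succ (g := fun φ => F φ ^ 2) (by fun_prop)]
    simp_rw [ih (hF.comp_cons _) (hFc_cons _)]
    rw [integral_const_mul, integral_finsetSum]
    · simp_rw [hF.setIntegral_sq_cons, ← cliffordPoint_cons]
      rw [← (Fin.consEquiv fun _ => Fin 4).sum_comp, Fintype.sum_prod_type, sum_comm, pow_succ,
        mul_assoc, ← mul_sum]
      rfl
    · exact fun c _ => ContinuousOn.integrableOn_compact isCompact_Icc
        (by fun_prop : Continuous fun t => F (Fin.cons t (cliffordPoint c)) ^ 2).continuousOn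

lemma mean_sq_eq {m : ℕ} {F : (Fin m → ℝ) → ℝ} (hF : IsTrigMultiaffine F)
    (hFc : Continuous F) :
    1 / (2 * π) ^ m * ∫ φ in Set.univ.pi (fun _ : Fin m => Set.Icc 0 (2 * π)), F φ ^ 2
      = (∑ c, F (cliffordPoint c) ^ 2) / 4 ^ m := by
  have h4 : (4 : ℝ) ^ m = 2 ^ m * 2 ^ m := by rw [← mul_pow]; norm_num
  rw [hF.setIntegral_sq hFc, div_pow, h4]
  field_simp
  ring

lemma apply_update_eq_of_modEq {m : ℕ} {F : (Fin m → ℝ) → ℝ} (hF : IsTrigMultiaffine F)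
    (φ : Fin m → ℝ) (k : Fin m) {a b : ℤ} (hab : a ≡ b [ZMOD 4]) :
    F (Function.update φ k (a * (π / 2))) = F (Function.update φ k (b * (π / 2))) := by
  obtain ⟨n, hn⟩ := hab.dvd
  obtain ⟨p, q, r, hpqr⟩ := hF k φ
  have hb : (b : ℝ) * (π / 2) = a * (π / 2) + n * (2 * π) := by
    rw [show b = a + 4 * n by omega]
    push_cast
    ring
  rw [hpqr, hpqr, hb, cos_add_int_mul_two_pi, sin_add_int_mul_two_pi]

lemma apply_cliffordPoint_add_single {m : ℕ} {F : (Fin m → ℝ) → ℝ}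
    (hF : IsTrigMultiaffine F) (c : Fin m → Fin 4) (k : Fin m) (w : Fin 4) {z : ℤ}
    (hz : z ≡ (w : ℕ) [ZMOD 4]) :
    F (cliffordPoint c + Pi.single k (z * (π / 2)))
      = F (cliffordPoint (c + Pi.single k w)) := by
  have hlhs : cliffordPoint c + Pi.single k (z * (π / 2))
      = Function.update (cliffordPoint c) k (((c k : ℕ) + z : ℤ) * (π / 2)) := by
    ext j
    rcases eq_or_ne j k with rfl | hj
    · simp only [Pi.add_apply, Pi.single_eq_same, Function.update_self, cliffordPoint]
      push_cast
      ring
    · simp [hj]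
  have hrhs : cliffordPoint (c + Pi.single k w)
      = Function.update (cliffordPoint c) k ((((c k + w : Fin 4) : ℕ) : ℤ) * (π / 2)) := by
    ext j
    rcases eq_or_ne j k with rfl | hj
    · simp [cliffordPoint]
    · simp [cliffordPoint, hj]
  rw [hlhs, hrhs]
  refine hF.apply_update_eq_of_modEq _ _ ?_
  simp only [Int.ModEq, Fin.val_add] at hz ⊢
  omega

end IsTrigMultiaffine

lemma card_filter_ne_zero_eq_sum_sq {ι : Type*} [Fintype ι] {f : ι → ℝ}
    (hf : ∀ i, f i = -1 ∨ f i = 0 ∨ f i = 1) :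
    (#{i | f i ≠ 0} : ℝ) = ∑ i, f i ^ 2 := by
  rw [card_filter, Nat.cast_sum]
  refine sum_congr rfl fun i _ => ?_
  rcases hf i with h | h | h <;> simp [h]

lemma card_filter_le_two_mul_of_shift {ι : Type*} [Fintype ι] [AddGroup ι] {p q : ι → Prop}
    [DecidablePred p] [DecidablePred q] (s : ι) (h : ∀ x, q x → p (x + s) ∨ p (x - s)) :
    #{x | q x} ≤ 2 * #{x | p x} := by
  classical
  have hshift (t : ι) : #{x | p (x + t)} = #{x | p x} :=
    card_equiv (Equiv.addRight t) (by simp)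
  calc #{x | q x} ≤ #(({x | p (x + s)} : Finset ι) ∪ ({x | p (x + -s)} : Finset ι)) :=
        card_le_card fun x hx => by simpa [← sub_eq_add_neg] using h x (by simpa using hx)
    _ ≤ #{x | p (x + s)} + #{x | p (x + -s)} := card_union_le _ _
    _ = 2 * #{x | p x} := by rw [hshift, hshift, two_mul]

open scoped Classical in
theorem stmt_19_general (m : ℕ) (ε : ℝ) (hε : 0 ≤ ε)
    (F : (Fin m → ℝ) → ℝ) (hFcont : Continuous F)
    (hF : ∀ (k : Fin m) (φ : Fin m → ℝ), ∃ a b c : ℝ, ∀ t : ℝ,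
      F (Function.update φ k t) = a + b * Real.cos t + c * Real.sin t)
    (hclif : ∀ c : Fin m → Fin 4,
      F (fun k => ((c k : ℕ) : ℝ) * (Real.pi / 2)) = -1 ∨
      F (fun k => ((c k : ℕ) : ℝ) * (Real.pi / 2)) = 0 ∨
      F (fun k => ((c k : ℕ) : ℝ) * (Real.pi / 2)) = 1)
    (hvar : (1 / (2 * Real.pi) ^ m) *
        ∫ φ in Set.univ.pi (fun _ : Fin m => Set.Icc (0:ℝ) (2 * Real.pi)), (F φ) ^ 2 ≤ ε)
    (k : Fin m)
    (G : (Fin m → ℝ) → ℝ)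
    (hG : ∀ φ : Fin m → ℝ,
      G φ = (1 / 2) * F (φ + Pi.single k (Real.pi / 2))
        - (1 / 2) * F (φ - Pi.single k (Real.pi / 2))) :
    ((Finset.univ.filter (fun c : Fin m → Fin 4 =>
        G (fun j => ((c j : ℕ) : ℝ) * (Real.pi / 2)) ≠ 0)).card : ℝ) / 4 ^ m
      ≤ 4 * ε := by
  replace hF : IsTrigMultiaffine F := hF
  have hshift_add (c : Fin m → Fin 4) :
      F (cliffordPoint c + Pi.single k (π / 2)) = F (cliffordPoint (c + Pi.single k 1)) := by
    simpa using hF.apply_cliffordPoint_add_single c k 1 (z := 1) rfl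
  have hshift_sub (c : Fin m → Fin 4) :
      F (cliffordPoint c - Pi.single k (π / 2)) = F (cliffordPoint (c - Pi.single k 1)) := by
    simpa [sub_eq_add_neg, ← Pi.single_neg] using
      hF.apply_cliffordPoint_add_single c k (-1) (z := -1) (by decide)
  have hcount : #{c | G (cliffordPoint c) ≠ 0} ≤ 2 * #{c | F (cliffordPoint c) ≠ 0} :=
    card_filter_le_two_mul_of_shift (Pi.single k 1) fun c hc => by
      by_contra! h
      exact hc (by rw [hG, hshift_add, hshift_sub, h.1, h.2]; ring)
  have hF_support : (#{c | F (cliffordPoint c) ≠ 0} : ℝ) / 4 ^ m ≤ ε := by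
    rwa [card_filter_ne_zero_eq_sum_sq (f := fun c => F (cliffordPoint c)) hclif,
      ← hF.mean_sq_eq hFcont]
  calc (#{c | G (cliffordPoint c) ≠ 0} : ℝ) / 4 ^ m
      ≤ 2 * (#{c | F (cliffordPoint c) ≠ 0} / 4 ^ m) := by
        rw [mul_div_assoc']
        gcongr
        exact_mod_cast hcount
    _ ≤ 4 * ε := by linarith

open scoped Classical in
theorem stmt_19 (m : ℕ) (hm : 1 ≤ m) (ε : ℝ) (hε : 0 ≤ ε)
    (F : (Fin m → ℝ) → ℝ) (hFcont : Continuous F)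
    (hF : ∀ (k : Fin m) (φ : Fin m → ℝ), ∃ a b c : ℝ, ∀ t : ℝ,
      F (Function.update φ k t) = a + b * Real.cos t + c * Real.sin t)
    (hclif : ∀ c : Fin m → Fin 4,
      F (fun k => ((c k : ℕ) : ℝ) * (Real.pi / 2)) = -1 ∨
      F (fun k => ((c k : ℕ) : ℝ) * (Real.pi / 2)) = 0 ∨
      F (fun k => ((c k : ℕ) : ℝ) * (Real.pi / 2)) = 1)
    (hvar : (1 / (2 * Real.pi) ^ m) *
        ∫ φ in Set.univ.pi (fun _ : Fin m => Set.Icc (0:ℝ) (2 * Real.pi)), (F φ) ^ 2 ≤ ε)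
    (k : Fin m)
    (G : (Fin m → ℝ) → ℝ)
    (hG : ∀ φ : Fin m → ℝ,
      G φ = (1 / 2) * F (φ + Pi.single k (Real.pi / 2))
        - (1 / 2) * F (φ - Pi.single k (Real.pi / 2))) :
    ((Finset.univ.filter (fun c : Fin m → Fin 4 =>
        G (fun j => ((c j : ℕ) : ℝ) * (Real.pi / 2)) ≠ 0)).card : ℝ) / 4 ^ m
      ≤ 4 * ε :=
  stmt_19_general m ε hε F hFcont hF hclif hvar k G hG
end
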